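/- arXiv:2510.21410 — 6 statements merged into one kernel-verified Lean document; each statement's English description precedes it below -/
import Mathlib

section
/- Let σ be a weight function with σ(0) = 0 and t = o(σ(t)) as t → ∞, and let γ̄(σ) < 1, where γ̄(σ) := inf{γ > 0 : ∃ A > 1 with liminf_{t→∞} σ(A^γ t)/σ(t) > A}. Then 1 − γ̄(σ) ≤ γ(σ*), where γ(ω) := sup{γ > 0 : ∃ K > 1 with limsup_{t→∞} ω(K^γ t)/ω(t) < K} (and γ(ω) := 0 if no such γ exists). -/
/-! If `σ(A^γ t) ≥ B σ(t)` for large `t`, with `1 < A < B` (this is what `P̄_{σ,γ}` provides),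
then substituting `t = A^γ u` in the supremum defining the conjugate gives
`σ*(λ s) ≤ B σ*(s)` for large `s`, where `λ = B / A^γ`; the small `t` are absorbed because
`σ*` grows superlinearly. For `K = λ^{1/(1-γ)}` we have `K^{1-γ} = λ` and `K > B` (as `A < B`),
so `σ*` satisfies `P_{σ*,1-γ}`. Hence `1 - γ ≤ γ(σ*)` for every admissible `γ < 1`, and the
bound follows on passing to the infimum. -/

open Filter

/-- The conjugate weight function `ω*(s) = sup_{t ≥ 0} (s·t − ω(t))`. -/
noncomputable def conj (ω : ℝ → ℝ) (s : ℝ) : ℝ :=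
  sSup ((fun t => s * t - ω t) '' Set.Ici 0)

/-- property (P_{ω,γ}): ∃ K > 1 with limsup_{t→∞} ω(K^γ t)/ω(t) < K. -/
def Pgamma (ω : ℝ → ℝ) (γ : ℝ) : Prop :=
  ∃ K : ℝ, 1 < K ∧ Filter.limsup (fun t : ℝ => ω (K ^ γ * t) / ω t) atTop < K

/-- property (P̄_{ω,γ}): ∃ A > 1 with liminf_{t→∞} ω(A^γ t)/ω(t) > A. -/
def Pbar (ω : ℝ → ℝ) (γ : ℝ) : Prop :=
  ∃ A : ℝ, 1 < A ∧ (A : ℝ) < Filter.liminf (fun t : ℝ => ω (A ^ γ * t) / ω t) atTop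

/-- Growth index γ(ω) := sup{γ > 0 : (P_{ω,γ})} with γ(ω) = 0 if no such γ exists. -/
noncomputable def gammaLower (ω : ℝ → ℝ) : EReal :=
  sSup (insert (0 : EReal) ((fun γ : ℝ => (γ : EReal)) '' {γ : ℝ | 0 < γ ∧ Pgamma ω γ}))

/-- Growth index γ̄(ω) := inf{γ > 0 : (P̄_{ω,γ})} (= +∞ if no such γ exists). -/
noncomputable def gammaUpper (ω : ℝ → ℝ) : EReal :=
  sInf ((fun γ : ℝ => (γ : EReal)) '' {γ : ℝ | 0 < γ ∧ Pbar ω γ})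

section

variable {σ : ℝ → ℝ}

lemma eventually_mul_le_of_isLittleO (hnn : ∀ t : ℝ, 0 ≤ t → 0 ≤ σ t)
    (ho : (fun t : ℝ => t) =o[atTop] σ) (C : ℝ) : ∀ᶠ t in atTop, C * t ≤ σ t := by
  filter_upwards [ho.def (inv_pos.2 (by positivity : 0 < |C| + 1)), eventually_ge_atTop 0]
    with t ht ht0
  rw [Real.norm_of_nonneg ht0, Real.norm_of_nonneg (hnn t ht0), inv_mul_eq_div,
    le_div_iff₀ (by positivity)] at ht
  nlinarith [le_abs_self C]

lemma conj_bddAbove (hnn : ∀ t : ℝ, 0 ≤ t → 0 ≤ σ t)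
    (ho : (fun t : ℝ => t) =o[atTop] σ) (s : ℝ) :
    BddAbove ((fun t => s * t - σ t) '' Set.Ici 0) := by
  obtain ⟨T, hT⟩ := eventually_atTop.1
    ((eventually_mul_le_of_isLittleO hnn ho |s|).and (eventually_ge_atTop 0))
  have hT0 : 0 ≤ T := (hT T le_rfl).2
  refine ⟨|s| * T, Set.forall_mem_image.2 fun t (ht : 0 ≤ t) => ?_⟩
  have hst : s * t ≤ |s| * t := mul_le_mul_of_nonneg_right (le_abs_self s) ht
  rcases le_total t T with htT | hTt
  · nlinarith [hnn t ht, abs_nonneg s]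
  · nlinarith [(hT t hTt).1, abs_nonneg s]

lemma le_conj (hnn : ∀ t : ℝ, 0 ≤ t → 0 ≤ σ t)
    (ho : (fun t : ℝ => t) =o[atTop] σ) (s : ℝ) {t : ℝ} (ht : 0 ≤ t) :
    s * t - σ t ≤ conj σ s :=
  le_csSup (conj_bddAbove hnn ho s) ⟨t, ht, rfl⟩

lemma conj_le {s M : ℝ} (h : ∀ t, 0 ≤ t → s * t - σ t ≤ M) : conj σ s ≤ M :=
  csSup_le (Set.nonempty_Ici.image _) (Set.forall_mem_image.2 h)

lemma eventually_mul_le_conj (hnn : ∀ t : ℝ, 0 ≤ t → 0 ≤ σ t)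
    (ho : (fun t : ℝ => t) =o[atTop] σ) (C : ℝ) : ∀ᶠ s in atTop, C * s ≤ conj σ s := by
  filter_upwards [eventually_ge_atTop (σ (|C| + 1)), eventually_ge_atTop 0] with s hs hs0
  have := le_conj hnn ho s (by positivity : (0 : ℝ) ≤ |C| + 1)
  nlinarith [le_abs_self C]

lemma eventually_conj_div_mul_le (hnn : ∀ t : ℝ, 0 ≤ t → 0 ≤ σ t)
    (ho : (fun t : ℝ => t) =o[atTop] σ) {a B T : ℝ} (ha : 0 < a) (hB : 0 ≤ B) (hT : 0 ≤ T)
    (hscale : ∀ t, T ≤ t → B * σ t ≤ σ (a * t)) :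
    ∀ᶠ s in atTop, conj σ (B / a * s) ≤ B * conj σ s := by
  filter_upwards [eventually_mul_le_conj hnn ho T, eventually_ge_atTop 0] with s hTs hs0
  refine conj_le fun t ht => ?_
  rcases le_total t (a * T) with htT | hTt
  · calc B / a * s * t - σ t ≤ B / a * s * (a * T) := by
          nlinarith [hnn t ht, mul_le_mul_of_nonneg_left htT (by positivity : 0 ≤ B / a * s)]
      _ = B * (T * s) := by field_simp
      _ ≤ B * conj σ s := mul_le_mul_of_nonneg_left hTs hB
  · have hu : T ≤ t / a := by rwa [le_div_iff₀ ha, mul_comm]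
    have hau : a * (t / a) = t := by field_simp
    calc B / a * s * t - σ t
        = B * (s * (t / a) - σ (t / a)) + (B * σ (t / a) - σ (a * (t / a))) := by
          rw [hau]; field_simp; ring
      _ ≤ B * conj σ s + 0 := by
          gcongr
          · exact le_conj hnn ho s (hT.trans hu)
          · exact sub_nonpos.2 (hscale _ hu)
      _ = B * conj σ s := add_zero _

lemma Pbar.exists_eventually_mul_le {γ : ℝ} (hpos : ∀ᶠ t in atTop, 0 < σ t)
    (h : Pbar σ γ) : ∃ A B : ℝ, 1 < A ∧ A < B ∧ ∀ᶠ t in atTop, B * σ t ≤ σ (A ^ γ * t) := by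
  obtain ⟨A, hA, hlim⟩ := h
  rw [liminf_eq] at hlim
  -- `sSup ∅ = 0 < 1 < A` in `ℝ`, so the set of eventual lower bounds is nonempty
  have hne : {b | ∀ᶠ t in atTop, b ≤ σ (A ^ γ * t) / σ t}.Nonempty := by
    by_contra hemp
    rw [Set.not_nonempty_iff_eq_empty.1 hemp, Real.sSup_empty] at hlim
    linarith
  obtain ⟨B, hB, hAB⟩ := exists_lt_of_lt_csSup hne hlim
  refine ⟨A, B, hA, hAB, ?_⟩
  filter_upwards [hB, hpos] with t hBt ht
  rwa [le_div_iff₀ ht] at hBt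

lemma lt_div_rpow_rpow_one_div_one_sub {A B γ : ℝ} (hA : 0 < A) (hAB : A < B) (hγ0 : 0 < γ)
    (hγ1 : γ < 1) : B < (B / A ^ γ) ^ (1 / (1 - γ)) := by
  have hB : 0 < B := hA.trans hAB
  have h1γ : 0 < 1 - γ := sub_pos.2 hγ1
  have hlt : B ^ (1 - γ) < B / A ^ γ := by
    rw [lt_div_iff₀ (by positivity)]
    calc B ^ (1 - γ) * A ^ γ < B ^ (1 - γ) * B ^ γ := by gcongr
      _ = B := by rw [← Real.rpow_add hB, sub_add_cancel, Real.rpow_one]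
  calc B = (B ^ (1 - γ)) ^ (1 / (1 - γ)) := by
        rw [← Real.rpow_mul hB.le, mul_one_div_cancel h1γ.ne', Real.rpow_one]
    _ < (B / A ^ γ) ^ (1 / (1 - γ)) := by gcongr

lemma Pbar.pgamma_conj (hnn : ∀ t : ℝ, 0 ≤ t → 0 ≤ σ t)
    (ho : (fun t : ℝ => t) =o[atTop] σ) {γ : ℝ} (hγ0 : 0 < γ) (hγ1 : γ < 1) (h : Pbar σ γ) :
    Pgamma (conj σ) (1 - γ) := by
  have hpos : ∀ᶠ t in atTop, 0 < σ t := by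
    filter_upwards [eventually_mul_le_of_isLittleO hnn ho 1, eventually_gt_atTop 0]
      with t ht ht0
    linarith
  obtain ⟨A, B, hA, hAB, hscale⟩ := h.exists_eventually_mul_le hpos
  obtain ⟨T, hT⟩ := eventually_atTop.1 (hscale.and (eventually_ge_atTop 0))
  have ha : 0 < A ^ γ := by positivity
  have hlam : 1 < B / A ^ γ := by
    rw [one_lt_div ha]
    calc A ^ γ < A ^ (1 : ℝ) := Real.rpow_lt_rpow_of_exponent_lt hA hγ1
      _ = A := Real.rpow_one A
      _ < B := hAB
  have hconj := eventually_conj_div_mul_le hnn ho ha (by linarith) (hT T le_rfl).2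
    fun t ht => (hT t ht).1
  have hK : (1 : ℝ) < (B / A ^ γ) ^ (1 / (1 - γ)) :=
    Real.one_lt_rpow hlam (by simpa using hγ1)
  refine ⟨_, hK, ?_⟩
  rw [← Real.rpow_mul (by linarith), one_div_mul_cancel (by linarith), Real.rpow_one]
  have hconj_nonneg : ∀ᶠ s in atTop, 0 ≤ conj σ s := by
    simpa using eventually_mul_le_conj hnn ho 0
  have hratio_nonneg : ∀ᶠ s in atTop, 0 ≤ conj σ (B / A ^ γ * s) / conj σ s := by
    filter_upwards [(tendsto_id.const_mul_atTop (zero_lt_one.trans hlam)).eventually hconj_nonneg,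
      hconj_nonneg] with s h1 h2
    exact div_nonneg h1 h2
  have hratio_le : ∀ᶠ s in atTop, conj σ (B / A ^ γ * s) / conj σ s ≤ B := by
    filter_upwards [hconj, eventually_mul_le_conj hnn ho 1, eventually_gt_atTop 0]
      with s h1 h2 hs
    rwa [div_le_iff₀ (by linarith)]
  exact (limsup_le_of_le (isCoboundedUnder_le_of_eventually_le _ hratio_nonneg) hratio_le).trans_lt
    (lt_div_rpow_rpow_one_div_one_sub (by linarith) hAB hγ0 hγ1)

lemma one_sub_gammaUpper_le_gammaLower {ω ω' : ℝ → ℝ}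
    (h : ∀ γ, 0 < γ → γ < 1 → Pbar ω γ → Pgamma ω' (1 - γ)) :
    1 - gammaUpper ω ≤ gammaLower ω' := by
  have hL0 : (0 : EReal) ≤ gammaLower ω' := le_sSup (Set.mem_insert _ _)
  have hle : ∀ γ : ℝ, 0 < γ → Pbar ω γ → ((1 - γ : ℝ) : EReal) ≤ gammaLower ω' := by
    intro γ hγ0 hP
    rcases lt_or_ge γ 1 with hγ1 | hγ1
    · exact le_sSup (Set.mem_insert_of_mem _ ⟨1 - γ, ⟨by linarith, h γ hγ0 hγ1 hP⟩, rfl⟩)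
    · exact le_trans (by exact_mod_cast sub_nonpos.2 hγ1) hL0
  generalize gammaLower ω' = L at hL0 hle
  induction L using EReal.rec with
  | bot => simp at hL0
  | top => exact le_top
  | coe l =>
    have hlb : ((1 - l : ℝ) : EReal) ≤ gammaUpper ω := by
      refine le_sInf (Set.forall_mem_image.2 fun γ hγ => ?_)
      have := hle γ hγ.1 hγ.2
      norm_cast at this ⊢
      linarith
    calc 1 - gammaUpper ω ≤ 1 - ((1 - l : ℝ) : EReal) := EReal.sub_le_sub le_rfl hlb
      _ = l := by norm_cast; ring

end

theorem stmt7_general (σ : ℝ → ℝ)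
    (hnn : ∀ t : ℝ, 0 ≤ t → 0 ≤ σ t)
    (ho : (fun t : ℝ => t) =o[atTop] σ) :
    (1 : EReal) - gammaUpper σ ≤ gammaLower (conj σ) :=
  one_sub_gammaUpper_le_gammaLower fun _ hγ0 hγ1 hP => hP.pgamma_conj hnn ho hγ0 hγ1

/-- For a weight function σ with σ(0) = 0, t = o(σ(t)) and γ̄(σ) < 1, one has
1 − γ̄(σ) ≤ γ(σ*). -/
theorem stmt7 (σ : ℝ → ℝ)
    (hnn : ∀ t : ℝ, 0 ≤ t → 0 ≤ σ t) (hmono : MonotoneOn σ (Set.Ici 0))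
    (htend : Tendsto σ atTop atTop)
    (h0 : σ 0 = 0) (ho : (fun t : ℝ => t) =o[atTop] σ)
    (hbar : gammaUpper σ < 1) :
    (1 : EReal) - gammaUpper σ ≤ gammaLower (conj σ) :=
  stmt7_general σ hnn ho
end

section
/- Let M = (M_p)_{p∈ℕ} be a sequence of positive reals, m_p := M_p/p!, μ_p := M_p/M_{p−1}. Then the following are equivalent: (i) there exists H ≥ 1 such that (m_{p+1})^{1/(p+1)} ≤ H^{1/(p+1)} (m_p)^{1/p} for all p ≥ 1; (ii) there exists A ≥ 1 such that μ_{p+1} ≤ A (M_p)^{1/p} for all p ≥ 1. Moreover, (i) with constant H implies (ii) with A = 2eH, and (ii) with constant A implies (i) with H = A. -/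
/-!
With m_p = M_p / p!, raising condition (i) at p to the power p + 1 turns it into
m_{p+1} ≤ H m_p^{1 + 1/p}, that is μ_{p+1} ≤ H · (p + 1) / (p!)^{1/p} · M_p^{1/p}.
So (i) and (ii) differ only by the factor (p + 1) / (p!)^{1/p}, which lies in [1, 2e]
because p! ≤ p^p ≤ e^p p!.
-/

open Real

lemma factorial_rpow_one_div_le {p : ℕ} (hp : p ≠ 0) :
    (p.factorial : ℝ) ^ ((1 : ℝ) / p) ≤ p := by
  have hp' : (0 : ℝ) < p := by positivity
  rw [one_div, rpow_inv_le_iff_of_pos (by positivity) hp'.le hp', rpow_natCast]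
  exact_mod_cast Nat.factorial_le_pow p

lemma le_exp_one_mul_factorial_rpow_one_div {p : ℕ} (hp : p ≠ 0) :
    (p : ℝ) ≤ exp 1 * (p.factorial : ℝ) ^ ((1 : ℝ) / p) := by
  have hp' : (0 : ℝ) < p := by positivity
  rw [one_div, ← pow_rpow_inv_natCast (exp_pos 1).le hp,
    ← mul_rpow (by positivity) (by positivity), le_rpow_inv_iff_of_pos hp'.le (by positivity) hp',
    rpow_natCast, exp_one_pow, ← div_le_iff₀ (by positivity)]
  exact pow_div_factorial_le_exp _ hp'.le p

lemma rpow_one_div_succ_le_iff {a b H : ℝ} (ha : 0 ≤ a) (hb : 0 ≤ b) (hH : 0 ≤ H) {p : ℕ}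
    (hp : p ≠ 0) :
    b ^ ((1 : ℝ) / (p + 1)) ≤ H ^ ((1 : ℝ) / (p + 1)) * a ^ ((1 : ℝ) / p) ↔
      b ≤ H * a * a ^ ((1 : ℝ) / p) := by
  have hexp : (1 + 1 / p) * ((1 : ℝ) / (p + 1)) = 1 / p := by field_simp
  have hrhs : H ^ ((1 : ℝ) / (p + 1)) * a ^ ((1 : ℝ) / p)
      = (H * a * a ^ ((1 : ℝ) / p)) ^ ((1 : ℝ) / (p + 1)) := by
    rw [mul_assoc, mul_rpow hH (by positivity), ← rpow_one_add' ha (by positivity),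
      ← rpow_mul ha, hexp]
  rw [hrhs, rpow_le_rpow_iff hb (by positivity) (by positivity)]

lemma rpow_div_factorial_succ_le_iff {x y H : ℝ} (hx : 0 < x) (hy : 0 ≤ y) (hH : 0 ≤ H)
    {p : ℕ} (hp : p ≠ 0) :
    (y / (p + 1).factorial) ^ ((1 : ℝ) / (p + 1))
        ≤ H ^ ((1 : ℝ) / (p + 1)) * (x / p.factorial) ^ ((1 : ℝ) / p) ↔
      y / x ≤ H * ((p + 1) / (p.factorial : ℝ) ^ ((1 : ℝ) / p)) * x ^ ((1 : ℝ) / p) := by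
  have hf : (0 : ℝ) < p.factorial := by positivity
  rw [rpow_one_div_succ_le_iff (by positivity) (by positivity) hH hp, div_rpow hx.le hf.le,
    Nat.factorial_succ, Nat.cast_mul, div_le_iff₀ (by positivity), div_le_iff₀ hx]
  push_cast
  field_simp

lemma one_le_succ_div_factorial_rpow {p : ℕ} (hp : p ≠ 0) :
    1 ≤ (p + 1) / (p.factorial : ℝ) ^ ((1 : ℝ) / p) := by
  rw [one_le_div (by positivity)]
  linarith [factorial_rpow_one_div_le hp]

lemma succ_div_factorial_rpow_le_two_mul_exp_one {p : ℕ} (hp : p ≠ 0) :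
    (p + 1) / (p.factorial : ℝ) ^ ((1 : ℝ) / p) ≤ 2 * exp 1 := by
  have hp' : (1 : ℝ) ≤ p := by exact_mod_cast Nat.one_le_iff_ne_zero.mpr hp
  rw [div_le_iff₀ (by positivity)]
  linarith [le_exp_one_mul_factorial_rpow_one_div hp]

/-- For a positive sequence M with m_p = M_p/p! and μ_p = M_p/M_{p−1}, the
conditions (i) ∃ H ≥ 1, (m_{p+1})^{1/(p+1)} ≤ H^{1/(p+1)}(m_p)^{1/p} for all p ≥ 1 and
(ii) ∃ A ≥ 1, μ_{p+1} ≤ A·(M_p)^{1/p} for all p ≥ 1 are equivalent; quantitatively (i)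
with H gives (ii) with A = 2eH and (ii) with A gives (i) with H = A. -/
theorem stmt9 (M : ℕ → ℝ) (hpos : ∀ p, 0 < M p) :
    (∀ H : ℝ, 1 ≤ H →
      (∀ p : ℕ, 1 ≤ p →
        (M (p + 1) / (Nat.factorial (p + 1) : ℝ)) ^ ((1 : ℝ) / (p + 1))
          ≤ H ^ ((1 : ℝ) / (p + 1)) * (M p / (Nat.factorial p : ℝ)) ^ ((1 : ℝ) / p)) →
      (∀ p : ℕ, 1 ≤ p →
        M (p + 1) / M p ≤ (2 * Real.exp 1 * H) * (M p) ^ ((1 : ℝ) / p))) ∧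
    (∀ A : ℝ, 1 ≤ A →
      (∀ p : ℕ, 1 ≤ p → M (p + 1) / M p ≤ A * (M p) ^ ((1 : ℝ) / p)) →
      (∀ p : ℕ, 1 ≤ p →
        (M (p + 1) / (Nat.factorial (p + 1) : ℝ)) ^ ((1 : ℝ) / (p + 1))
          ≤ A ^ ((1 : ℝ) / (p + 1)) * (M p / (Nat.factorial p : ℝ)) ^ ((1 : ℝ) / p))) := by
  constructor
  · intro H hH hi p hp
    have hp0 : p ≠ 0 := Nat.one_le_iff_ne_zero.mp hp
    calc M (p + 1) / M p
        ≤ H * ((p + 1) / (p.factorial : ℝ) ^ ((1 : ℝ) / p)) * M p ^ ((1 : ℝ) / p) :=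
          (rpow_div_factorial_succ_le_iff (hpos p) (hpos (p + 1)).le (by linarith) hp0).mp
            (hi p hp)
      _ ≤ H * (2 * exp 1) * M p ^ ((1 : ℝ) / p) :=
          mul_le_mul_of_nonneg_right
            (mul_le_mul_of_nonneg_left (succ_div_factorial_rpow_le_two_mul_exp_one hp0)
              (by linarith))
            (rpow_nonneg (hpos p).le _)
      _ = 2 * exp 1 * H * M p ^ ((1 : ℝ) / p) := by ring
  · intro A hA hii p hp
    have hp0 : p ≠ 0 := Nat.one_le_iff_ne_zero.mp hp
    refine (rpow_div_factorial_succ_le_iff (hpos p) (hpos (p + 1)).le (by linarith) hp0).mpr ?_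
    calc M (p + 1) / M p ≤ A * M p ^ ((1 : ℝ) / p) := hii p hp
      _ ≤ A * ((p + 1) / (p.factorial : ℝ) ^ ((1 : ℝ) / p)) * M p ^ ((1 : ℝ) / p) :=
          mul_le_mul_of_nonneg_right
            (le_mul_of_one_le_right (by linarith) (one_le_succ_div_factorial_rpow hp0))
            (rpow_nonneg (hpos p).le _)
end

section
/- Let M = (M_p)_{p∈ℕ} be a positive sequence such that both M and its conjugate M* (defined by M*_p := p!/M_p) are log-convex. Then M satisfies the moderate growth condition: there exists C ≥ 1 such that M_{p+q} ≤ C^{p+q+1} M_p M_q for all p, q ∈ ℕ. -/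
/-!
Write `μ_j = M_{j+1} / M_j`. Log-convexity of `M* = p! / M` says exactly that `μ_j / (j + 1)` is
nonincreasing, so `μ_{p+j} / (p + j + 1) ≤ μ_j / (j + 1)`. Multiplying these for `j < q` gives
`M_{p+q} M_0 ≤ binom(p+q, q) M_p M_q ≤ 2^(p+q) M_p M_q`, which is moderate growth with
`C = max 2 (1 / M_0)`.
-/

open Nat

def IsLogConvexSeq (N : ℕ → ℝ) : Prop :=
  ∀ p : ℕ, 1 ≤ p → N p ^ 2 ≤ N (p - 1) * N (p + 1)

section ConjLogConvex

variable {M : ℕ → ℝ}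

theorem antitone_ratio_div_succ_of_isLogConvexSeq_conj (hM : ∀ p, 0 < M p)
    (hconj : IsLogConvexSeq fun p => (p ! : ℝ) / M p) :
    Antitone fun j => M (j + 1) / ((j + 1) * M j) := by
  refine antitone_nat_of_succ_le fun k => ?_
  have h := hconj (k + 1) (by omega)
  simp only [Nat.add_sub_cancel, factorial_succ, cast_mul, cast_succ] at h
  have hk : (0 : ℝ) < k ! := by exact_mod_cast factorial_pos k
  have hk0 := hM k; have hk1 := hM (k + 1); have hk2 := hM (k + 2)
  rw [div_le_div_iff₀ (by positivity) (by positivity)]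
  field_simp at h
  push_cast
  linear_combination h

theorem mul_factorial_le_of_antitone (hM : ∀ p, 0 < M p)
    (hf : Antitone fun j => M (j + 1) / ((j + 1) * M j)) (p q : ℕ) :
    M (p + q) * M 0 * (p ! * q !) ≤ (p + q)! * (M p * M q) := by
  induction q with
  | zero => simp [mul_comm]
  | succ q ih =>
    have hratio := hf (Nat.le_add_left q p)
    have hq := hM q; have hpq := hM (p + q); have h0 := hM 0; have hp := hM p
    have hq' := hM (q + 1)
    simp only [cast_add] at hratio
    rw [div_le_div_iff₀ (mul_pos (by positivity) hpq) (mul_pos (by positivity) hq)] at hratio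
    have hstep : M (p + q + 1) * ((q + 1) * M q) * (M (p + q) * M 0 * (p ! * q !))
        ≤ M (q + 1) * ((p + q + 1) * M (p + q)) * ((p + q)! * (M p * M q)) :=
      mul_le_mul hratio ih (by positivity) (by positivity)
    rw [← add_assoc, factorial_succ, factorial_succ]
    push_cast
    refine le_of_mul_le_mul_left ?_ (mul_pos hq hpq)
    linear_combination hstep

theorem mul_le_two_pow_mul_of_antitone (hM : ∀ p, 0 < M p)
    (hf : Antitone fun j => M (j + 1) / ((j + 1) * M j)) (p q : ℕ) :
    M (p + q) * M 0 ≤ 2 ^ (p + q) * (M p * M q) := by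
  have hp := hM p; have hq := hM q
  have hchoose : ((p + q).choose q : ℝ) ≤ 2 ^ (p + q) := by
    exact_mod_cast choose_le_two_pow _ _
  refine le_of_mul_le_mul_right ?_ (by positivity : (0 : ℝ) < p ! * q !)
  calc M (p + q) * M 0 * (p ! * q !) ≤ (p + q)! * (M p * M q) :=
        mul_factorial_le_of_antitone hM hf p q
    _ = (p + q).choose q * (M p * M q) * (p ! * q !) := by
        rw [← add_choose_mul_factorial_mul_factorial]; push_cast; ring
    _ ≤ 2 ^ (p + q) * (M p * M q) * (p ! * q !) := by gcongr

end ConjLogConvex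

theorem stmt10_general (M : ℕ → ℝ) (hpos : ∀ p, 0 < M p)
    (hlcMstar : ∀ p : ℕ, 1 ≤ p →
      ((Nat.factorial p : ℝ) / M p) ^ 2
        ≤ ((Nat.factorial (p - 1) : ℝ) / M (p - 1)) * ((Nat.factorial (p + 1) : ℝ) / M (p + 1))) :
    ∃ C : ℝ, 1 ≤ C ∧ ∀ p q : ℕ, M (p + q) ≤ C ^ (p + q + 1) * (M p * M q) := by
  have hM0 := hpos 0
  have hbound := mul_le_two_pow_mul_of_antitone hpos
    (antitone_ratio_div_succ_of_isLogConvexSeq_conj hpos hlcMstar)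
  obtain ⟨C, hC2, hC0⟩ : ∃ C : ℝ, 2 ≤ C ∧ (M 0)⁻¹ ≤ C := ⟨_, le_max_left _ _, le_max_right _ _⟩
  refine ⟨C, by linarith, fun p q => ?_⟩
  have hpq : 0 ≤ M p * M q := (mul_pos (hpos p) (hpos q)).le
  calc M (p + q) = (M 0)⁻¹ * (M (p + q) * M 0) := by field_simp
    _ ≤ (M 0)⁻¹ * (2 ^ (p + q) * (M p * M q)) := by gcongr _ * ?_; exact hbound p q
    _ ≤ C * (C ^ (p + q) * (M p * M q)) := by gcongr
    _ = C ^ (p + q + 1) * (M p * M q) := by ring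

/-- If a positive sequence M and its conjugate M* (M*_p = p!/M_p) are both
log-convex, then M has moderate growth: ∃ C ≥ 1 with M_{p+q} ≤ C^{p+q+1} M_p M_q. -/
theorem stmt10 (M : ℕ → ℝ) (hpos : ∀ p, 0 < M p)
    (hlcM : ∀ p : ℕ, 1 ≤ p → (M p) ^ 2 ≤ M (p - 1) * M (p + 1))
    (hlcMstar : ∀ p : ℕ, 1 ≤ p →
      ((Nat.factorial p : ℝ) / M p) ^ 2
        ≤ ((Nat.factorial (p - 1) : ℝ) / M (p - 1)) * ((Nat.factorial (p + 1) : ℝ) / M (p + 1))) :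
    ∃ C : ℝ, 1 ≤ C ∧ ∀ p q : ℕ, M (p + q) ≤ C ^ (p + q + 1) * (M p * M q) :=
  stmt10_general M hpos hlcMstar
end

section
/- Let L be a log-convex weight sequence (lim_p (L_p)^{1/p} = ∞) with lim_p (L_p/p!)^{1/p} = 0, such that the conjugate L* (given by L*_p := p!/L_p) is also log-convex. Write λ_p := L_p/L_{p−1} and λ*_p := p/λ_p. Then for every q ≥ 1: ω_L*(λ*_q) ≥ ω_{L*}(λ*_q), where ω_L*(s) := sup_{t≥0}(st − ω_L(t)) and ω_{L*} is the weight function associated to L*. Moreover ω_L*(2s) ≥ ω_{L*}(s) whenever λ*_q < s < λ*_{q+1} for some q ≥ 1, and ω_L*(s) ≥ 0 = ω_{L*}(s) for s ∈ [0, λ*_1]. -/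
open Filter

/-- Associated weight function ω_S(t) = sup_p log(S_0 t^p / S_p). -/
noncomputable def assoc (S : ℕ → ℝ) (t : ℝ) : ℝ :=
  ⨆ p : ℕ, Real.log (S 0 * t ^ p / S p)

/-- Conjugate sequence S*_p = p!/S_p. -/
noncomputable def conjSeq (S : ℕ → ℝ) (p : ℕ) : ℝ :=
  (Nat.factorial p : ℝ) / S p

/-- Conjugate quotients λ*_q = q/λ_q = q·L_{q−1}/L_q. -/
noncomputable def lamStar (L : ℕ → ℝ) (q : ℕ) : ℝ :=
  (q : ℝ) * L (q - 1) / L q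

private lemma pow_div_fact_le_exp {x : ℝ} (hx : 0 ≤ x) (q : ℕ) :
    x ^ q / (Nat.factorial q : ℝ) ≤ Real.exp x := by
  refine le_trans ?_ (Real.sum_le_exp_of_nonneg hx (q + 1))
  exact Finset.single_le_sum (f := fun i => x ^ i / (Nat.factorial i : ℝ))
    (fun i _ => by positivity) (Finset.self_mem_range_succ q)

private lemma rpow_inv_pow {x : ℝ} (hx : 0 < x) {p : ℕ} (hp : p ≠ 0) :
    (x ^ ((1 : ℝ) / p)) ^ p = x := by
  have hp' : (p : ℝ) ≠ 0 := Nat.cast_ne_zero.mpr hp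
  rw [← Real.rpow_natCast (x ^ ((1 : ℝ) / p)) p, ← Real.rpow_mul hx.le,
    one_div, inv_mul_cancel₀ hp', Real.rpow_one]

private lemma quot_mono (S : ℕ → ℝ) (hS : ∀ p, 0 < S p)
    (hlc : ∀ p : ℕ, 1 ≤ p → (S p) ^ 2 ≤ S (p - 1) * S (p + 1))
    {a b : ℕ} (ha : 1 ≤ a) (hab : a ≤ b) :
    S a / S (a - 1) ≤ S b / S (b - 1) := by
  induction b, hab using Nat.le_induction with
  | base => exact le_refl _
  | succ b hb IH =>
    refine IH.trans ?_
    have h := hlc b (ha.trans hb)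
    have hb1 : b + 1 - 1 = b := rfl
    rw [hb1, div_le_div_iff₀ (hS (b - 1)) (hS b)]
    nlinarith [hS b, hS (b - 1), hS (b + 1)]

private lemma lemB (S : ℕ → ℝ) (hS : ∀ p, 0 < S p) (q : ℕ) {s : ℝ} (hs : 0 < s)
    (hup : ∀ k, s * S (q + k) ≤ S (q + k + 1))
    (hdown : ∀ m, 1 ≤ m → m ≤ q → S m ≤ s * S (m - 1)) :
    assoc S s ≤ Real.log (S 0 * s ^ q / S q) := by
  have claimUp : ∀ k, s ^ k * S q ≤ S (q + k) := by
    intro k; induction k with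
    | zero => simp
    | succ k IH =>
      calc s ^ (k + 1) * S q = s * (s ^ k * S q) := by ring
        _ ≤ s * S (q + k) := mul_le_mul_of_nonneg_left IH hs.le
        _ ≤ S (q + k + 1) := hup k
  have claimDown : ∀ k, k ≤ q → S q ≤ s ^ k * S (q - k) := by
    intro k; induction k with
    | zero => intro _; simp
    | succ k IH =>
      intro hk
      have IH' := IH (by omega)
      have h1 : 1 ≤ q - k := by omega
      have h2 : q - k ≤ q := by omega
      have hd := hdown (q - k) h1 h2
      have heq : q - k - 1 = q - (k + 1) := by omega
      calc S q ≤ s ^ k * S (q - k) := IH'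
        _ ≤ s ^ k * (s * S (q - k - 1)) :=
            mul_le_mul_of_nonneg_left hd (by positivity)
        _ = s ^ (k + 1) * S (q - (k + 1)) := by rw [heq]; ring
  have key : ∀ p, S 0 * s ^ p / S p ≤ S 0 * s ^ q / S q := by
    intro p
    rw [div_le_div_iff₀ (hS p) (hS q)]
    rcases le_or_gt p q with h | h
    · have hcd := claimDown (q - p) (Nat.sub_le q p)
      have heq : q - (q - p) = p := by omega
      rw [heq] at hcd
      have hpow : s ^ p * s ^ (q - p) = s ^ q := by
        rw [← pow_add]; congr 1; omega
      calc S 0 * s ^ p * S q ≤ S 0 * s ^ p * (s ^ (q - p) * S p) := by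
            exact mul_le_mul_of_nonneg_left hcd (mul_nonneg (hS 0).le (by positivity))
        _ = S 0 * (s ^ p * s ^ (q - p)) * S p := by ring
        _ = S 0 * s ^ q * S p := by rw [hpow]
    · have hcu := claimUp (p - q)
      have heq : q + (p - q) = p := by omega
      rw [heq] at hcu
      have hqp : q + (p - q) = p := by omega
      have hpow : s ^ q * s ^ (p - q) = s ^ p := by
        rw [← pow_add, hqp]
      calc S 0 * s ^ p * S q = S 0 * (s ^ q * (s ^ (p - q) * S q)) := by
            rw [← hpow]; ring
        _ ≤ S 0 * (s ^ q * S p) := by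
            apply mul_le_mul_of_nonneg_left _ (hS 0).le
            exact mul_le_mul_of_nonneg_left hcu (by positivity)
        _ = S 0 * s ^ q * S p := by ring
  exact ciSup_le fun p => Real.log_le_log
    (div_pos (mul_pos (hS 0) (pow_pos hs p)) (hS p)) (key p)

private lemma bddA (L : ℕ → ℝ) (hpos : ∀ p, 0 < L p)
    (hroot : Tendsto (fun p : ℕ => (L p) ^ ((1 : ℝ) / p)) atTop atTop)
    {t : ℝ} (ht : 0 ≤ t) :
    BddAbove (Set.range fun p : ℕ => Real.log (L 0 * t ^ p / L p)) := by
  obtain ⟨N, hN⟩ := Filter.eventually_atTop.mp (hroot.eventually_ge_atTop (t + 1))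
  set f : ℕ → ℝ := fun p => Real.log (L 0 * t ^ p / L p) with hf
  refine ⟨(Finset.range (N + 1)).sup' ⟨0, by simp⟩ f ⊔ (Real.log (L 0) ⊔ 0), ?_⟩
  rintro y ⟨p, rfl⟩
  rcases lt_or_ge p (N + 1) with hp | hp
  · exact le_sup_of_le_left (Finset.le_sup' f (Finset.mem_range.mpr hp))
  · have hpN : N ≤ p := by omega
    have hp0 : p ≠ 0 := by omega
    have h1 : t + 1 ≤ L p ^ ((1 : ℝ) / p) := hN p hpN
    have h2 : (t + 1) ^ p ≤ L p := by
      calc (t + 1) ^ p ≤ (L p ^ ((1 : ℝ) / p)) ^ p := pow_le_pow_left₀ (by linarith) h1 p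
        _ = L p := rpow_inv_pow (hpos p) hp0
    have h3 : t ^ p ≤ L p := le_trans (pow_le_pow_left₀ ht (by linarith) p) h2
    have h4 : L 0 * t ^ p / L p ≤ L 0 := by
      rw [div_le_iff₀ (hpos p)]
      exact mul_le_mul_of_nonneg_left h3 (hpos 0).le
    have hnn : (0 : ℝ) ≤ L 0 * t ^ p / L p :=
      div_nonneg (mul_nonneg (hpos 0).le (pow_nonneg ht p)) (hpos p).le
    rcases eq_or_lt_of_le hnn with h | h
    · refine le_sup_of_le_right (le_sup_of_le_right ?_)
      show f p ≤ 0
      simp only [hf, ← h, Real.log_zero, le_refl]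
    · exact le_sup_of_le_right (le_sup_of_le_left (Real.log_le_log h h4))

private lemma assoc_zero (L : ℕ → ℝ) (hpos : ∀ p, 0 < L p) : assoc L 0 = 0 := by
  unfold assoc
  have h : (fun p : ℕ => Real.log (L 0 * (0 : ℝ) ^ p / L p)) = fun _ => (0 : ℝ) := by
    funext p
    cases p with
    | zero => simp [div_self (ne_of_gt (hpos 0))]
    | succ n => simp
  rw [h, ciSup_const]

private lemma bddConj (L : ℕ → ℝ) (hpos : ∀ p, 0 < L p)
    (hroot : Tendsto (fun p : ℕ => (L p) ^ ((1 : ℝ) / p)) atTop atTop)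
    (hsmall :
      Tendsto (fun p : ℕ => (L p / (Nat.factorial p : ℝ)) ^ ((1 : ℝ) / p)) atTop (nhds 0))
    {s : ℝ} (hs : 0 ≤ s) :
    BddAbove ((fun t => s * t - assoc L t) '' Set.Ici 0) := by
  set ε : ℝ := Real.exp (-(s + 2)) with hε
  have hεpos : 0 < ε := Real.exp_pos _
  obtain ⟨N₀, hN₀⟩ := Filter.eventually_atTop.mp (hsmall.eventually (gt_mem_nhds hεpos))
  set N := max N₀ 1 with hNdef
  have hlog : ∀ p, N ≤ p → Real.log (L p) ≤ p * Real.log p - p * (s + 2) := by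
    intro p hp
    have hp1 : 1 ≤ p := le_trans (le_max_right _ _) hp
    have hp0 : p ≠ 0 := by omega
    have hfac : (0 : ℝ) < (Nat.factorial p : ℝ) := by exact_mod_cast p.factorial_pos
    have hx : (0 : ℝ) < L p / (Nat.factorial p : ℝ) := div_pos (hpos p) hfac
    have h1 : (L p / (Nat.factorial p : ℝ)) ^ ((1 : ℝ) / p) < ε :=
      hN₀ p (le_trans (le_max_left _ _) hp)
    have h2 : L p / (Nat.factorial p : ℝ) ≤ ε ^ p := by
      calc L p / (Nat.factorial p : ℝ)
          = ((L p / (Nat.factorial p : ℝ)) ^ ((1 : ℝ) / p)) ^ p := (rpow_inv_pow hx hp0).symm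
        _ ≤ ε ^ p := pow_le_pow_left₀ (Real.rpow_nonneg hx.le _) h1.le p
    have h3 : L p ≤ ε ^ p * (Nat.factorial p : ℝ) := by
      rw [div_le_iff₀ hfac] at h2; exact h2
    have h4 : (Nat.factorial p : ℝ) ≤ (p : ℝ) ^ p := by
      exact_mod_cast Nat.factorial_le_pow p
    have hppos : (0 : ℝ) < (p : ℝ) := by exact_mod_cast hp1
    have h5 : L p ≤ ε ^ p * (p : ℝ) ^ p :=
      le_trans h3 (mul_le_mul_of_nonneg_left h4 (by positivity))
    calc Real.log (L p) ≤ Real.log (ε ^ p * (p : ℝ) ^ p) := Real.log_le_log (hpos p) h5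
      _ = p * Real.log ε + p * Real.log p := by
          rw [Real.log_mul (by positivity) (by positivity), Real.log_pow, Real.log_pow]
      _ = p * Real.log p - p * (s + 2) := by rw [hε, Real.log_exp]; ring
  refine ⟨max (s * (N + 1)) (2 - Real.log (L 0)), ?_⟩
  rintro y ⟨t, ht, rfl⟩
  simp only [Set.mem_Ici] at ht
  have hbA := bddA L hpos hroot ht
  rcases le_or_gt t (N : ℝ) with hcase | hcase
  · have h0 : Real.log (L 0 * t ^ 0 / L 0) = 0 := by
      simp [div_self (ne_of_gt (hpos 0))]
    have hge : (0 : ℝ) ≤ assoc L t := by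
      have := le_ciSup hbA 0
      rw [h0] at this
      exact this
    have : s * t ≤ s * (N + 1) := by
      apply mul_le_mul_of_nonneg_left _ hs
      push_cast; linarith
    simp only []
    calc s * t - assoc L t ≤ s * t := by linarith
      _ ≤ s * (N + 1) := this
      _ ≤ max (s * (N + 1)) (2 - Real.log (L 0)) := le_max_left _ _
  · set p := ⌈t⌉₊ with hpdef
    have hN1 : (1 : ℝ) ≤ (N : ℝ) := by
      have : 1 ≤ N := le_max_right N₀ 1
      exact_mod_cast this
    have ht1 : 1 < t := lt_of_le_of_lt hN1 hcase
    have htpos : 0 < t := by linarith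
    have hpt : t ≤ (p : ℝ) := Nat.le_ceil t
    have hpt1 : (p : ℝ) < t + 1 := Nat.ceil_lt_add_one ht
    have hpN : N ≤ p := by
      have h : (N : ℝ) < (p : ℝ) := lt_of_lt_of_le hcase hpt
      exact_mod_cast h.le
    have hp1 : 1 ≤ p := le_trans (le_max_right _ _) hpN
    have hppos : (0 : ℝ) < (p : ℝ) := by exact_mod_cast hp1
    have hlogp := hlog p hpN
    have hterm : Real.log (L 0 * t ^ p / L p)
        = Real.log (L 0) + p * Real.log t - Real.log (L p) := by
      rw [Real.log_div (ne_of_gt (mul_pos (hpos 0) (pow_pos htpos p))) (ne_of_gt (hpos p)),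
        Real.log_mul (ne_of_gt (hpos 0)) (pow_ne_zero p (ne_of_gt htpos)), Real.log_pow]
    have hlt : Real.log (p : ℝ) - Real.log t ≤ 1 / t := by
      rw [← Real.log_div (ne_of_gt hppos) (ne_of_gt htpos)]
      have h := Real.log_le_sub_one_of_pos (show (0 : ℝ) < (p : ℝ) / t by positivity)
      have hle : (p : ℝ) / t - 1 ≤ 1 / t := by
        have h1 : (p : ℝ) / t - 1 = ((p : ℝ) - t) / t := by field_simp
        rw [h1]
        apply div_le_div_of_nonneg_right ?_ ?_ |>.trans_eq rfl
        all_goals first | linarith | exact htpos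
      linarith
    have h2p : (p : ℝ) * (Real.log (p : ℝ) - Real.log t) ≤ 2 := by
      calc (p : ℝ) * (Real.log (p : ℝ) - Real.log t) ≤ (p : ℝ) * (1 / t) :=
            mul_le_mul_of_nonneg_left hlt hppos.le
        _ ≤ 2 := by rw [mul_one_div, div_le_iff₀ htpos]; nlinarith
    have hD : t * (s + 2) ≤ (p : ℝ) * (s + 2) :=
      mul_le_mul_of_nonneg_right hpt (by linarith)
    have hterm_ge : Real.log (L 0) - 2 + s * t ≤ Real.log (L 0 * t ^ p / L p) := by
      rw [hterm]
      nlinarith [hlogp, h2p, hD, htpos, hs, mul_nonneg hs htpos.le]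
    have hsup : Real.log (L 0) - 2 + s * t ≤ assoc L t :=
      le_trans hterm_ge (le_ciSup hbA p)
    calc s * t - assoc L t ≤ 2 - Real.log (L 0) := by linarith
      _ ≤ max (s * (N + 1)) (2 - Real.log (L 0)) := le_max_right _ _

private lemma conjSeq_pos (L : ℕ → ℝ) (hpos : ∀ p, 0 < L p) (p : ℕ) : 0 < conjSeq L p :=
  div_pos (by exact_mod_cast p.factorial_pos) (hpos p)

private lemma lamStar_eq (L : ℕ → ℝ) (hpos : ∀ p, 0 < L p) {a : ℕ} (ha : 1 ≤ a) :
    lamStar L a = conjSeq L a / conjSeq L (a - 1) := by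
  obtain ⟨m, rfl⟩ : ∃ m, a = m + 1 := ⟨a - 1, by omega⟩
  unfold lamStar conjSeq
  have h1 : (Nat.factorial (m + 1) : ℝ) = (m + 1) * Nat.factorial m := by
    exact_mod_cast Nat.factorial_succ m
  have hm : (Nat.factorial m : ℝ) ≠ 0 := by
    exact_mod_cast m.factorial_ne_zero
  simp only [Nat.add_sub_cancel]
  rw [h1]
  have h2 : L m ≠ 0 := ne_of_gt (hpos m)
  have h3 : L (m + 1) ≠ 0 := ne_of_gt (hpos (m + 1))
  field_simp
  push_cast
  ring

private lemma lamStar_pos (L : ℕ → ℝ) (hpos : ∀ p, 0 < L p) {a : ℕ} (ha : 1 ≤ a) :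
    0 < lamStar L a := by
  unfold lamStar
  have : (0 : ℝ) < (a : ℝ) := by exact_mod_cast ha
  exact div_pos (mul_pos this (hpos _)) (hpos a)

private lemma key_log (L : ℕ → ℝ) (hpos : ∀ p, 0 < L p) (q : ℕ) {s : ℝ} (hs : 0 < s) :
    Real.log (conjSeq L 0 * s ^ q / conjSeq L q)
      + Real.log (L 0 * (L q / L (q - 1)) ^ q / L q) ≤ s * (L q / L (q - 1)) := by
  set lam := L q / L (q - 1) with hlam
  have hlamp : 0 < lam := div_pos (hpos q) (hpos (q - 1))
  have hfac : (0 : ℝ) < (Nat.factorial q : ℝ) := by exact_mod_cast q.factorial_pos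
  have hA : (0 : ℝ) < conjSeq L 0 * s ^ q / conjSeq L q :=
    div_pos (mul_pos (conjSeq_pos L hpos 0) (pow_pos hs q)) (conjSeq_pos L hpos q)
  have hB : (0 : ℝ) < L 0 * lam ^ q / L q :=
    div_pos (mul_pos (hpos 0) (pow_pos hlamp q)) (hpos q)
  rw [← Real.log_mul (ne_of_gt hA) (ne_of_gt hB)]
  have hAB : conjSeq L 0 * s ^ q / conjSeq L q * (L 0 * lam ^ q / L q)
      = (s * lam) ^ q / (Nat.factorial q : ℝ) := by
    unfold conjSeq
    rw [mul_pow]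
    have h2 : L 0 ≠ 0 := ne_of_gt (hpos 0)
    have h3 : L q ≠ 0 := ne_of_gt (hpos q)
    have h4 : L (q - 1) ≠ 0 := ne_of_gt (hpos (q - 1))
    have h5 : (Nat.factorial q : ℝ) ≠ 0 := ne_of_gt hfac
    rw [hlam]
    field_simp [Nat.factorial_zero]
    ring
  rw [hAB]
  have h1 := pow_div_fact_le_exp (mul_nonneg hs.le hlamp.le) q
  calc Real.log ((s * lam) ^ q / (Nat.factorial q : ℝ))
      ≤ Real.log (Real.exp (s * lam)) :=
        Real.log_le_log (div_pos (pow_pos (mul_pos hs hlamp) q) hfac) h1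
    _ = s * lam := Real.log_exp _

/-- For a log-convex weight sequence L with (L_p/p!)^{1/p} → 0 whose conjugate
L* is also log-convex: ω_L*(s) ≥ 0 = ω_{L*}(s) on [0, λ*_1]; ω_L*(λ*_q) ≥ ω_{L*}(λ*_q) for
q ≥ 1; and ω_L*(2s) ≥ ω_{L*}(s) whenever λ*_q < s < λ*_{q+1}, q ≥ 1. -/
theorem stmt15 (L : ℕ → ℝ) (hpos : ∀ p, 0 < L p)
    (hlc : ∀ p : ℕ, 1 ≤ p → (L p) ^ 2 ≤ L (p - 1) * L (p + 1))
    (hroot : Tendsto (fun p : ℕ => (L p) ^ ((1 : ℝ) / p)) atTop atTop)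
    (hsmall :
      Tendsto (fun p : ℕ => (L p / (Nat.factorial p : ℝ)) ^ ((1 : ℝ) / p)) atTop (nhds 0))
    (hlcStar : ∀ p : ℕ, 1 ≤ p →
      (conjSeq L p) ^ 2 ≤ conjSeq L (p - 1) * conjSeq L (p + 1)) :
    (∀ s : ℝ, 0 ≤ s → s ≤ lamStar L 1 →
      assoc (conjSeq L) s = 0 ∧ 0 ≤ conj (assoc L) s) ∧
    (∀ q : ℕ, 1 ≤ q →
      assoc (conjSeq L) (lamStar L q) ≤ conj (assoc L) (lamStar L q)) ∧
    (∀ q : ℕ, 1 ≤ q → ∀ s : ℝ, lamStar L q < s → s < lamStar L (q + 1) →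
      assoc (conjSeq L) s ≤ conj (assoc L) (2 * s)) := by
  have hLc := conjSeq_pos L hpos
  have hσmono : ∀ a b : ℕ, 1 ≤ a → a ≤ b → lamStar L a ≤ lamStar L b := by
    intro a b ha hab
    rw [lamStar_eq L hpos ha, lamStar_eq L hpos (ha.trans hab)]
    exact quot_mono (conjSeq L) hLc hlcStar ha hab
  have hLc_succ : ∀ m : ℕ, 1 ≤ m → conjSeq L m = lamStar L m * conjSeq L (m - 1) := by
    intro m hm
    rw [lamStar_eq L hpos hm, div_mul_cancel₀ _ (ne_of_gt (hLc (m - 1)))]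
  have hL_succ : ∀ m : ℕ, 1 ≤ m → L m = (L m / L (m - 1)) * L (m - 1) := by
    intro m hm
    rw [div_mul_cancel₀ _ (ne_of_gt (hpos (m - 1)))]
  -- common core for parts 2 and 3
  have core : ∀ q : ℕ, 1 ≤ q → ∀ s : ℝ, 0 < s →
      (∀ m, 1 ≤ m → m ≤ q → lamStar L m ≤ s) → (∀ k, s ≤ lamStar L (q + k + 1)) →
      ∀ s' : ℝ, 0 ≤ s' → s * (L q / L (q - 1)) ≤ s' * (L q / L (q - 1)) →
      assoc (conjSeq L) s ≤ conj (assoc L) s' := by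
    intro q hq s hs hdownσ hupσ s' hs' hss'
    set lam := L q / L (q - 1) with hlamdef
    have hlamp : 0 < lam := div_pos (hpos q) (hpos (q - 1))
    have hupper : assoc (conjSeq L) s
        ≤ Real.log (conjSeq L 0 * s ^ q / conjSeq L q) := by
      refine lemB (conjSeq L) hLc q hs ?_ ?_
      · intro k
        rw [hLc_succ (q + k + 1) (by omega)]
        simp only [Nat.add_sub_cancel]
        exact mul_le_mul_of_nonneg_right (hupσ k) (hLc (q + k)).le
      · intro m h1 h2
        rw [hLc_succ m h1]
        exact mul_le_mul_of_nonneg_right (hdownσ m h1 h2) (hLc (m - 1)).le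
    have hωL : assoc L lam ≤ Real.log (L 0 * lam ^ q / L q) := by
      refine lemB L hpos q hlamp ?_ ?_
      · intro k
        have hquot : lam ≤ L (q + k + 1) / L (q + k) := by
          have := quot_mono L hpos hlc hq (show q ≤ q + k + 1 by omega)
          simpa using this
        calc lam * L (q + k) ≤ (L (q + k + 1) / L (q + k)) * L (q + k) :=
              mul_le_mul_of_nonneg_right hquot (hpos (q + k)).le
          _ = L (q + k + 1) := div_mul_cancel₀ _ (ne_of_gt (hpos (q + k)))
      · intro m h1 h2
        have hquot : L m / L (m - 1) ≤ lam := quot_mono L hpos hlc h1 h2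
        calc L m = (L m / L (m - 1)) * L (m - 1) := hL_succ m h1
          _ ≤ lam * L (m - 1) := mul_le_mul_of_nonneg_right hquot (hpos (m - 1)).le
    have hconj : s' * lam - assoc L lam ≤ conj (assoc L) s' :=
      le_csSup (bddConj L hpos hroot hsmall hs')
        ⟨lam, Set.mem_Ici.mpr hlamp.le, rfl⟩
    have hkey := key_log L hpos q hs
    linarith [hupper, hωL, hconj, hkey, hss']
  refine ⟨?_, ?_, ?_⟩
  · -- Part 1
    intro s hs0 hs1
    constructor
    · have hclaim : ∀ p, conjSeq L 0 * s ^ p ≤ conjSeq L p := by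
        intro p; induction p with
        | zero => simp
        | succ p IH =>
          have hσ : s ≤ lamStar L (p + 1) := hs1.trans (hσmono 1 (p + 1) le_rfl (by omega))
          calc conjSeq L 0 * s ^ (p + 1) = (conjSeq L 0 * s ^ p) * s := by ring
            _ ≤ conjSeq L p * s := mul_le_mul_of_nonneg_right IH hs0
            _ ≤ conjSeq L p * lamStar L (p + 1) :=
                mul_le_mul_of_nonneg_left hσ (hLc p).le
            _ = conjSeq L (p + 1) := by
                rw [hLc_succ (p + 1) (by omega)]
                simp only [Nat.add_sub_cancel]
                ring
      have hle : ∀ p : ℕ, Real.log (conjSeq L 0 * s ^ p / conjSeq L p) ≤ 0 := by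
        intro p
        apply Real.log_nonpos
        · exact div_nonneg (mul_nonneg (hLc 0).le (pow_nonneg hs0 p)) (hLc p).le
        · rw [div_le_one (hLc p)]; exact hclaim p
      apply le_antisymm
      · exact ciSup_le hle
      · have h0 : Real.log (conjSeq L 0 * s ^ 0 / conjSeq L 0) = 0 := by
          simp [div_self (ne_of_gt (hLc 0))]
        have hbdd : BddAbove (Set.range fun p : ℕ =>
            Real.log (conjSeq L 0 * s ^ p / conjSeq L p)) :=
          ⟨0, by rintro y ⟨p, rfl⟩; exact hle p⟩
        have := le_ciSup hbdd 0
        rw [h0] at this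
        exact this
    · have hmem : (0 : ℝ) ∈ (fun t => s * t - assoc L t) '' Set.Ici 0 :=
        ⟨0, Set.self_mem_Ici, by simp [assoc_zero L hpos]⟩
      exact le_csSup (bddConj L hpos hroot hsmall hs0) hmem
  · -- Part 2
    intro q hq
    have hsp := lamStar_pos L hpos hq
    exact core q hq (lamStar L q) hsp (fun m h1 h2 => hσmono m q h1 h2)
      (fun k => hσmono q (q + k + 1) hq (by omega)) (lamStar L q) hsp.le le_rfl
  · -- Part 3
    intro q hq s hlt1 hlt2
    have hsp : 0 < s := lt_trans (lamStar_pos L hpos hq) hlt1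
    have hlamp : 0 < L q / L (q - 1) := div_pos (hpos q) (hpos (q - 1))
    refine core q hq s hsp (fun m h1 h2 => (hσmono m q h1 h2).trans hlt1.le)
      (fun k => hlt2.le.trans (hσmono (q + 1) (q + k + 1) (by omega) (by omega)))
      (2 * s) (by linarith) ?_
    nlinarith [mul_pos hsp hlamp]
end

section
/- Let F = {N^{(β)} : β > 0} be a one-parameter family of positive sequences such that N^{(β₁)}_p ≤ N^{(β₂)}_p for all p whenever 0 < β₁ ≤ β₂, and such that lim_{p→∞}(N^{(β)}_p/p!)^{1/p} = 0 for each β > 0. Then there exists a sequence a = (a_p) with a_0 = 1 such that p ↦ (a_p)^{1/p} is non-increasing, lim_p (a_p)^{1/p} = 0, and for every β > 0: lim_{p→∞} (a_p · p! / N^{(β)}_p)^{1/p} = +∞. In particular a is a uniform bound for F: for each β there is C ≥ 1 with N^{(β)}_p/p! ≤ C a_p for all p. -/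
/-!
Put `n_β(p) := (N^{(β)}_p / p!)^{1/p}`. The sequences `(k + 1) n_{k+1}`, `k ∈ ℕ`, all tend to `0`,
and a diagonal argument produces a single positive non-increasing `e → 0` that eventually
dominates each of them: take the supremum over `k` and over all later indices of these
sequences, truncated at `1 / (k + 1)`. By monotonicity in `β`, `e` then eventually dominates
`c n_β` for every `β > 0` and every constant `c`, so `a_p := e_p ^ p` has
`(a_p p! / N^{(β)}_p)^{1/p} = e_p / n_β(p) → ∞`.
-/

open Filter

/-- The truncation at `1 / (k + 1)` keeps the supremum finite and makes it tend to `0` although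
the `f k` need not tend to `0` uniformly in `k`. -/
noncomputable def diagonalMajorant (f : ℕ → ℕ → ℝ) (p : ℕ) : ℝ :=
  ⨆ i : ℕ × ℕ, min (f i.1 (i.2 + p)) (1 / ((i.1 : ℝ) + 1))

namespace diagonalMajorant

variable (f : ℕ → ℕ → ℝ)

lemma bddAbove_range (p : ℕ) :
    BddAbove (Set.range fun i : ℕ × ℕ => min (f i.1 (i.2 + p)) (1 / ((i.1 : ℝ) + 1))) := by
  refine ⟨1, ?_⟩
  rintro _ ⟨i, rfl⟩
  exact (min_le_right _ _).trans (div_le_one_of_le₀ (by simp) (by positivity))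

lemma min_le (k j p : ℕ) :
    min (f k (j + p)) (1 / ((k : ℝ) + 1)) ≤ diagonalMajorant f p :=
  le_ciSup (bddAbove_range f p) (k, j)

lemma antitone : Antitone (diagonalMajorant f) := by
  intro p p' hpp'
  obtain ⟨d, rfl⟩ := Nat.exists_eq_add_of_le hpp'
  refine ciSup_le fun i => ?_
  simpa only [add_comm p d, ← add_assoc] using min_le f i.1 (i.2 + d) p

variable {f}

lemma pos (hpos : ∀ k p, 0 < f k p) (p : ℕ) : 0 < diagonalMajorant f p :=
  (lt_min (by simpa using hpos 0 p) one_pos).trans_le (by simpa using min_le f 0 0 p)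

lemma eventually_le (hf : ∀ k, Tendsto (f k) atTop (nhds 0)) (k : ℕ) :
    f k ≤ᶠ[atTop] diagonalMajorant f := by
  filter_upwards [(hf k).eventually_le_const (by positivity : (0 : ℝ) < 1 / ((k : ℝ) + 1))]
    with p hp
  have h := min_le f k 0 p
  rwa [zero_add, min_eq_left hp] at h

lemma tendsto_zero (hpos : ∀ k p, 0 < f k p) (hf : ∀ k, Tendsto (f k) atTop (nhds 0)) :
    Tendsto (diagonalMajorant f) atTop (nhds 0) := by
  refine tendsto_order.2 ⟨fun b hb => Eventually.of_forall fun p => hb.trans (pos hpos p),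
    fun b hb => ?_⟩
  obtain ⟨K, hK⟩ := exists_nat_one_div_lt (half_pos hb)
  have hhead : ∀ᶠ p in atTop, ∀ k ∈ Finset.range K, ∀ q, p ≤ q → f k q ≤ b / 2 :=
    (eventually_all_finset _).2 fun k _ =>
      eventually_forall_ge_atTop.2 ((hf k).eventually_le_const (half_pos hb))
  filter_upwards [hhead] with p hp
  refine (ciSup_le fun i => ?_).trans_lt (half_lt_self hb)
  rcases lt_or_ge i.1 K with hk | hk
  · exact (min_le_left _ _).trans (hp i.1 (Finset.mem_range.2 hk) _ (Nat.le_add_left p i.2))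
  · refine (min_le_right _ _).trans (le_trans ?_ hK.le)
    gcongr

end diagonalMajorant

theorem exists_pos_antitone_tendsto_zero_eventually_ge {f : ℕ → ℕ → ℝ}
    (hpos : ∀ k p, 0 < f k p) (hf : ∀ k, Tendsto (f k) atTop (nhds 0)) :
    ∃ e : ℕ → ℝ, (∀ p, 0 < e p) ∧ Antitone e ∧ Tendsto e atTop (nhds 0) ∧
      ∀ k, f k ≤ᶠ[atTop] e :=
  ⟨diagonalMajorant f, diagonalMajorant.pos hpos, diagonalMajorant.antitone f,
    diagonalMajorant.tendsto_zero hpos hf, diagonalMajorant.eventually_le hf⟩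

theorem exists_pos_antitone_tendsto_zero_eventually_mul_le {n : ℝ → ℕ → ℝ}
    (hpos : ∀ β, 0 < β → ∀ p, 0 < n β p)
    (hmono : ∀ β₁ β₂, 0 < β₁ → β₁ ≤ β₂ → ∀ p, n β₁ p ≤ n β₂ p)
    (hn : ∀ β, 0 < β → Tendsto (n β) atTop (nhds 0)) :
    ∃ e : ℕ → ℝ, (∀ p, 0 < e p) ∧ Antitone e ∧ Tendsto e atTop (nhds 0) ∧
      ∀ β, 0 < β → ∀ c : ℝ, ∀ᶠ p in atTop, c * n β p ≤ e p := by
  have hk : ∀ k : ℕ, (0 : ℝ) < k + 1 := fun k => by positivity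
  obtain ⟨e, he_pos, he_anti, he_lim, hdom⟩ :=
    exists_pos_antitone_tendsto_zero_eventually_ge (f := fun k p => (k + 1) * n (k + 1) p)
      (fun k p => mul_pos (hk k) (hpos _ (hk k) p))
      (fun k => by simpa using (hn _ (hk k)).const_mul ((k : ℝ) + 1))
  refine ⟨e, he_pos, he_anti, he_lim, fun β hβ c => ?_⟩
  set k := ⌈max β c⌉₊
  have hmax : max β c ≤ k + 1 := (Nat.le_ceil _).trans (le_add_of_nonneg_right zero_le_one)
  filter_upwards [hdom k] with p hp
  calc c * n β p ≤ (k + 1) * n (k + 1) p :=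
        mul_le_mul (le_of_max_le_right hmax) (hmono _ _ hβ (le_of_max_le_left hmax) p)
          (hpos β hβ p).le (hk k).le
    _ ≤ e p := hp

theorem exists_one_le_forall_le_mul_of_eventuallyLE {u v : ℕ → ℝ} (hv : ∀ p, 0 < v p)
    (h : u ≤ᶠ[atTop] v) : ∃ C : ℝ, 1 ≤ C ∧ ∀ p, u p ≤ C * v p := by
  obtain ⟨P, hP⟩ := eventually_atTop.1 h
  obtain ⟨B, hB⟩ := ((Finset.range P).image fun p => u p / v p).bddAbove
  refine ⟨max (1 : ℝ) B, le_max_left _ _, fun p => ?_⟩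
  rcases lt_or_ge p P with hp | hp
  · have hB' : u p / v p ≤ B :=
      hB (Finset.mem_coe.2 (Finset.mem_image_of_mem _ (Finset.mem_range.2 hp)))
    calc u p ≤ B * v p := (div_le_iff₀ (hv p)).1 hB'
      _ ≤ max (1 : ℝ) B * v p := mul_le_mul_of_nonneg_right (le_max_right _ _) (hv p).le
  · calc u p ≤ v p := hP p hp
      _ ≤ max (1 : ℝ) B * v p := le_mul_of_one_le_left (hv p).le (le_max_left _ _)

/-- Given a one-parameter family of positive sequences N^{(β)} (β > 0),
pointwise non-decreasing in β, with (N^{(β)}_p/p!)^{1/p} → 0 for each β > 0, there exists a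
positive sequence a with a_0 = 1, p ↦ (a_p)^{1/p} non-increasing and tending to 0, such
that (a_p·p!/N^{(β)}_p)^{1/p} → ∞ for every β > 0; in particular a is a uniform bound:
for each β > 0 there is C ≥ 1 with N^{(β)}_p/p! ≤ C·a_p for all p. -/
theorem stmt16 (N : ℝ → ℕ → ℝ)
    (hpos : ∀ β : ℝ, 0 < β → ∀ p : ℕ, 0 < N β p)
    (hmono : ∀ β₁ β₂ : ℝ, 0 < β₁ → β₁ ≤ β₂ → ∀ p : ℕ, N β₁ p ≤ N β₂ p)
    (hsmall : ∀ β : ℝ, 0 < β →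
      Tendsto (fun p : ℕ => (N β p / (Nat.factorial p : ℝ)) ^ ((1 : ℝ) / p)) atTop (nhds 0)) :
    ∃ a : ℕ → ℝ, a 0 = 1 ∧ (∀ p, 0 < a p) ∧
      (∀ p q : ℕ, 1 ≤ p → p ≤ q → (a q) ^ ((1 : ℝ) / q) ≤ (a p) ^ ((1 : ℝ) / p)) ∧
      Tendsto (fun p : ℕ => (a p) ^ ((1 : ℝ) / p)) atTop (nhds 0) ∧
      (∀ β : ℝ, 0 < β →
        Tendsto (fun p : ℕ => (a p * (Nat.factorial p : ℝ) / N β p) ^ ((1 : ℝ) / p))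
          atTop atTop) ∧
      (∀ β : ℝ, 0 < β → ∃ C : ℝ, 1 ≤ C ∧
        ∀ p : ℕ, N β p / (Nat.factorial p : ℝ) ≤ C * a p) := by
  have hfac : ∀ p : ℕ, (0 : ℝ) < p.factorial := fun p => mod_cast p.factorial_pos
  set n : ℝ → ℕ → ℝ := fun β p => (N β p / p.factorial) ^ ((1 : ℝ) / p)
  have hNn : ∀ β, 0 < β → ∀ p, 0 < N β p / p.factorial :=
    fun β hβ p => div_pos (hpos β hβ p) (hfac p)
  obtain ⟨e, he_pos, he_anti, he_lim, hdom⟩ := exists_pos_antitone_tendsto_zero_eventually_mul_le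
    (n := n) (fun β hβ p => Real.rpow_pos_of_pos (hNn β hβ p) _)
    (fun β₁ β₂ hβ₁ hβ₂ p => Real.rpow_le_rpow (hNn β₁ hβ₁ p).le
      (div_le_div_of_nonneg_right (hmono β₁ β₂ hβ₁ hβ₂ p) (hfac p).le) (by positivity))
    hsmall
  have hroot : ∀ {x : ℝ} {p : ℕ}, 0 ≤ x → p ≠ 0 → (x ^ p) ^ ((1 : ℝ) / p) = x := fun hx hp => by
    rw [one_div, Real.pow_rpow_inv_natCast hx hp]
  have hn_pow : ∀ β, 0 < β → ∀ p ≠ 0, n β p ^ p = N β p / p.factorial := fun β hβ p hp => by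
    simp only [n, one_div, Real.rpow_inv_natCast_pow (hNn β hβ p).le hp]
  have hratio : ∀ β, 0 < β → ∀ p ≠ 0,
      (e p ^ p * p.factorial / N β p) ^ ((1 : ℝ) / p) = e p / n β p := fun β hβ p hp => by
    rw [← div_div_eq_mul_div, Real.div_rpow (pow_pos (he_pos p) p).le (hNn β hβ p).le,
      hroot (he_pos p).le hp]
  refine ⟨fun p => e p ^ p, pow_zero _, fun p => pow_pos (he_pos p) p, ?_, ?_, ?_, ?_⟩
  · intro p q hp hpq
    rw [hroot (he_pos q).le (by omega), hroot (he_pos p).le (by omega)]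
    exact he_anti hpq
  · refine he_lim.congr' ?_
    filter_upwards [eventually_ne_atTop 0] with p hp
    exact (hroot (he_pos p).le hp).symm
  · intro β hβ
    refine tendsto_atTop.2 fun M => ?_
    filter_upwards [hdom β hβ M, eventually_ne_atTop 0] with p hp hp0
    rw [hratio β hβ p hp0]
    exact (le_div_iff₀ (Real.rpow_pos_of_pos (hNn β hβ p) _)).2 hp
  · intro β hβ
    refine exists_one_le_forall_le_mul_of_eventuallyLE (fun p => pow_pos (he_pos p) p) ?_
    filter_upwards [hdom β hβ 1, eventually_ne_atTop 0] with p hp hp0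
    rw [← hn_pow β hβ p hp0]
    exact pow_le_pow_left₀ (Real.rpow_nonneg (hNn β hβ p).le _)
      (by simpa only [one_mul] using hp) p
end

section
/- Let ω be a weight function that is slowly varying, i.e. ω(ut)/ω(t) → 1 as t → ∞ for each u > 0. Then γ(ω) = +∞, where γ(ω) := sup{γ > 0 : ∃ K > 1 with limsup_{t→∞} ω(K^γ t)/ω(t) < K}. In particular ω cannot satisfy the condition (ω₆): ∃ H ≥ 1 ∀ t ≥ 0: 2ω(t) ≤ ω(Ht) + H. -/
open Filter

open Topology

def IsSlowlyVarying (ω : ℝ → ℝ) : Prop :=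
  ∀ u : ℝ, 0 < u → Tendsto (fun t : ℝ => ω (u * t) / ω t) atTop (𝓝 1)

theorem IsSlowlyVarying.pgamma {ω : ℝ → ℝ} (hω : IsSlowlyVarying ω) (γ : ℝ) : Pgamma ω γ :=
  ⟨2, one_lt_two, by
    rw [(hω _ (Real.rpow_pos_of_pos two_pos γ)).limsup_eq]
    exact one_lt_two⟩

theorem gammaLower_eq_top_of_forall_pgamma {ω : ℝ → ℝ} (h : ∀ γ : ℝ, 0 < γ → Pgamma ω γ) :
    gammaLower ω = ⊤ := by
  rw [gammaLower, sSup_eq_top]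
  intro b hb
  obtain ⟨x, hbx, -⟩ := EReal.lt_iff_exists_real_btwn.mp hb
  have hpos : (0 : ℝ) < max x 1 := one_pos.trans_le (le_max_right x 1)
  refine ⟨(max x 1 : ℝ), Set.mem_insert_of_mem _ ⟨max x 1, ⟨hpos, h _ hpos⟩, rfl⟩, ?_⟩
  exact hbx.trans_le (mod_cast le_max_left x 1)

/-- Once `ω t > 2C`, the inequality forces `ω (H t) / ω t > 3 / 2`, so the ratio cannot tend to `1`. -/
theorem not_eventually_two_mul_le_add {ω : ℝ → ℝ} {H C : ℝ} (htend : Tendsto ω atTop atTop)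
    (hH : Tendsto (fun t : ℝ => ω (H * t) / ω t) atTop (𝓝 1)) :
    ¬ ∀ᶠ t in atTop, 2 * ω t ≤ ω (H * t) + C := by
  intro hle
  have hratio : ∀ᶠ t in atTop, (3 / 2 : ℝ) ≤ ω (H * t) / ω t := by
    filter_upwards [htend.eventually_gt_atTop (max (2 * C) 0), hle] with t hωt ht
    have hωpos : 0 < ω t := (le_max_right _ _).trans_lt hωt
    have hC : 2 * C < ω t := (le_max_left _ _).trans_lt hωt
    rw [le_div_iff₀ hωpos]
    linarith
  have : (3 / 2 : ℝ) ≤ 1 := ge_of_tendsto hH hratio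
  norm_num at this

theorem stmt19_general (ω : ℝ → ℝ)
    (htend : Tendsto ω atTop atTop)
    (hslow : ∀ u : ℝ, 0 < u →
      Tendsto (fun t : ℝ => ω (u * t) / ω t) atTop (nhds 1)) :
    gammaLower ω = ⊤ ∧
      ¬ (∃ H : ℝ, 1 ≤ H ∧ ∀ t : ℝ, 0 ≤ t → 2 * ω t ≤ ω (H * t) + H) := by
  have hω : IsSlowlyVarying ω := hslow
  refine ⟨gammaLower_eq_top_of_forall_pgamma fun γ _ => hω.pgamma γ, ?_⟩
  rintro ⟨H, hH, hω6⟩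
  exact not_eventually_two_mul_le_add htend (hω H (one_pos.trans_le hH))
    ((eventually_ge_atTop 0).mono hω6)

/-- If a weight function ω is slowly varying then γ(ω) = +∞; in particular
ω cannot satisfy (ω₆): ∃ H ≥ 1, ∀ t ≥ 0, 2ω(t) ≤ ω(Ht) + H. -/
theorem stmt19 (ω : ℝ → ℝ)
    (hnn : ∀ t : ℝ, 0 ≤ t → 0 ≤ ω t)
    (hmono : MonotoneOn ω (Set.Ici 0))
    (htend : Tendsto ω atTop atTop)
    (hslow : ∀ u : ℝ, 0 < u →
      Tendsto (fun t : ℝ => ω (u * t) / ω t) atTop (nhds 1)) :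
    gammaLower ω = ⊤ ∧
      ¬ (∃ H : ℝ, 1 ≤ H ∧ ∀ t : ℝ, 0 ≤ t → 2 * ω t ≤ ω (H * t) + H) :=
  stmt19_general ω htend hslow
end
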